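/- For any knot x̂_{l,j} at level l ≥ 2 with support T_{l,j} = [x̂_{l,j} - 2^{1-l}, x̂_{l,j} + 2^{1-l}], both endpoints of T_{l,j} belong to the set of ancestors S_A(x̂_{l,j}) obtained by iterating the parent map. -/
import Mathlib


noncomputable def xhat (l j : ℕ) : ℝ := (2*(j:ℝ)-1)*(2:ℝ)^((1:ℤ)-(l:ℤ)) - 1

noncomputable def Xhat (l : ℕ) : Set ℝ :=
  if l = 0 then {0} else if l = 1 then {-1, 1}
  else {x | ∃ j : ℕ, 1 ≤ j ∧ j ≤ 2^(l-1) ∧ x = xhat l j}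

/-- `isParent l x y` : the knot `y` (at level `l-1`) is the parent of the knot `x` at level `l`. -/
def isParent (l : ℕ) (x y : ℝ) : Prop :=
  (l = 1 ∧ y = 0 ∧ (x = -1 ∨ x = 1)) ∨
  (l = 2 ∧ ((y = -1 ∧ x = -(1/2)) ∨ (y = 1 ∧ x = 1/2))) ∨
  (3 ≤ l ∧ y ∈ Xhat (l-1) ∧
    (x = y - (2:ℝ)^(-((l:ℤ)-1)) ∨ x = y + (2:ℝ)^(-((l:ℤ)-1))))

/-- one step of the ancestor relation: `q` is the parent (with level) of `p`. -/
def parentStep (p q : ℕ × ℝ) : Prop := p.1 = q.1 + 1 ∧ isParent p.1 p.2 q.2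

/-- `isAncestor p q` : the knot `q` is an ancestor of the knot `p` in the knot tree. -/
def isAncestor (p q : ℕ × ℝ) : Prop := Relation.TransGen parentStep p q

lemma main : ∀ n : ℕ, ∀ j : ℕ, 1 ≤ j → j ≤ 2^(n+1) →
    (∃ l₁ : ℕ, isAncestor (n+2, xhat (n+2) j) (l₁, xhat (n+2) j - (2:ℝ)^(-(n:ℤ)-1))) ∧
    (∃ l₂ : ℕ, isAncestor (n+2, xhat (n+2) j) (l₂, xhat (n+2) j + (2:ℝ)^(-(n:ℤ)-1))) := by
  intro n
  induction n with
  | zero =>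
    intro j hj hj'
    have step1 : parentStep (1, (-1:ℝ)) (0, 0) := ⟨rfl, Or.inl ⟨rfl, rfl, Or.inl rfl⟩⟩
    have step1' : parentStep (1, (1:ℝ)) (0, 0) := ⟨rfl, Or.inl ⟨rfl, rfl, Or.inr rfl⟩⟩
    simp only [Nat.zero_add, Nat.cast_zero] at *
    interval_cases j
    · have hx : xhat 2 1 = -(1/2 : ℝ) := by norm_num [xhat]
      have step2 : parentStep (2, xhat 2 1) (1, -1) := by
        exact ⟨rfl, Or.inr (Or.inl ⟨rfl, Or.inl ⟨rfl, hx⟩⟩)⟩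
      constructor
      · refine ⟨1, ?_⟩
        have : xhat 2 1 - (2:ℝ)^(-(0:ℤ)-1) = -1 := by rw [hx]; norm_num
        rw [this]; exact Relation.TransGen.single step2
      · refine ⟨0, ?_⟩
        have : xhat 2 1 + (2:ℝ)^(-(0:ℤ)-1) = 0 := by rw [hx]; norm_num
        rw [this]; exact Relation.TransGen.head step2 (Relation.TransGen.single step1)
    · have hx : xhat 2 2 = (1/2 : ℝ) := by norm_num [xhat]
      have step2 : parentStep (2, xhat 2 2) (1, 1) := by
        exact ⟨rfl, Or.inr (Or.inl ⟨rfl, Or.inr ⟨rfl, hx⟩⟩)⟩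
      constructor
      · refine ⟨0, ?_⟩
        have : xhat 2 2 - (2:ℝ)^(-(0:ℤ)-1) = 0 := by rw [hx]; norm_num
        rw [this]; exact Relation.TransGen.head step2 (Relation.TransGen.single step1')
      · refine ⟨1, ?_⟩
        have : xhat 2 2 + (2:ℝ)^(-(0:ℤ)-1) = 1 := by rw [hx]; norm_num
        rw [this]; exact Relation.TransGen.single step2
  | succ n ih =>
    intro j hj hj'
    -- e4 = 2^(-n-2), e2 = 2^(-n-1)
    have he : (2:ℝ)^(-(n:ℤ)-2) * 2 = (2:ℝ)^(-(n:ℤ)-1) := by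
      rw [← zpow_add_one₀ (two_ne_zero)]; ring_nf
    obtain ⟨m, hm⟩ : ∃ m, j = 2*m+1 ∨ j = 2*m+2 := ⟨(j-1)/2, by omega⟩
    have hmle : m + 1 ≤ 2^(n+1) := by
      have : (2:ℕ)^(n+1+1) = 2 * 2^(n+1) := by ring
      omega
    have hmem : xhat (n+2) (m+1) ∈ Xhat (n+3-1) := by
      have : (n+3-1 : ℕ) = n+2 := by omega
      rw [this, Xhat]
      simp only [Nat.add_eq_zero, and_false, if_false]
      norm_num
      exact ⟨m+1, by omega, by simpa using hmle, rfl⟩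
    have hexp : -((((n:ℕ)+3 : ℕ) : ℤ) - 1) = -(n:ℤ) - 2 := by push_cast; ring
    -- coordinates
    have hx3 : xhat (n+3) j = (2*(j:ℝ)-1)*(2:ℝ)^(-(n:ℤ)-2) - 1 := by
      rw [xhat]; push_cast; ring_nf
    have hx2 : xhat (n+2) (m+1) = (2*(m:ℝ)+1)*(2:ℝ)^(-(n:ℤ)-1) - 1 := by
      rw [xhat]; push_cast; ring_nf
    have hc : (-(((n:ℕ)+1 : ℕ):ℤ) - 1) = -(n:ℤ)-2 := by push_cast; ring
    have hgoal : (n+1+2 : ℕ) = n+3 := rfl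
    rw [hgoal, hc]
    obtain ⟨⟨l₁, h1⟩, ⟨l₂, h2⟩⟩ := ih (m+1) (by omega) hmle
    rcases hm with h | h <;> subst h
    · have hkey2 : xhat (n+3) (2*m+1) + (2:ℝ)^(-(n:ℤ)-2) = xhat (n+2) (m+1) := by
        rw [hx3, hx2, ← he]; push_cast; ring
      have hkey1 : xhat (n+3) (2*m+1) - (2:ℝ)^(-(n:ℤ)-2)
          = xhat (n+2) (m+1) - (2:ℝ)^(-(n:ℤ)-1) := by
        rw [hx3, hx2, ← he]; push_cast; ring
      have hps : parentStep (n+3, xhat (n+3) (2*m+1)) (n+2, xhat (n+2) (m+1)) := by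
        refine ⟨rfl, Or.inr (Or.inr ⟨by omega, hmem, Or.inl ?_⟩)⟩
        rw [hexp, ← hkey2]; ring
      exact ⟨⟨l₁, by rw [hkey1]; exact Relation.TransGen.head hps h1⟩,
             ⟨n+2, by rw [hkey2]; exact Relation.TransGen.single hps⟩⟩
    · have hkey1 : xhat (n+3) (2*m+2) - (2:ℝ)^(-(n:ℤ)-2) = xhat (n+2) (m+1) := by
        rw [hx3, hx2, ← he]; push_cast; ring
      have hkey2 : xhat (n+3) (2*m+2) + (2:ℝ)^(-(n:ℤ)-2)
          = xhat (n+2) (m+1) + (2:ℝ)^(-(n:ℤ)-1) := by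
        rw [hx3, hx2, ← he]; push_cast; ring
      have hps : parentStep (n+3, xhat (n+3) (2*m+2)) (n+2, xhat (n+2) (m+1)) := by
        refine ⟨rfl, Or.inr (Or.inr ⟨by omega, hmem, Or.inr ?_⟩)⟩
        rw [hexp, ← hkey1]; ring
      exact ⟨⟨n+2, by rw [hkey1]; exact Relation.TransGen.single hps⟩,
             ⟨l₂, by rw [hkey2]; exact Relation.TransGen.head hps h2⟩⟩

theorem support_endpoints_are_ancestors (l j : ℕ) (hl : 2 ≤ l)
    (hj : 1 ≤ j) (hj' : j ≤ 2^(l-1)) :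
    (∃ l₁ : ℕ, isAncestor (l, xhat l j) (l₁, xhat l j - (2:ℝ)^((1:ℤ)-(l:ℤ)))) ∧
    (∃ l₂ : ℕ, isAncestor (l, xhat l j) (l₂, xhat l j + (2:ℝ)^((1:ℤ)-(l:ℤ)))) := by
  obtain ⟨n, rfl⟩ : ∃ n, l = n+2 := ⟨l-2, by omega⟩
  have hc : ((1:ℤ) - (((n:ℕ)+2:ℕ):ℤ)) = -(n:ℤ)-1 := by push_cast; ring
  rw [hc]
  exact main n j hj (by simpa using hj')
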